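/- Let A > 0 and let σ : ℝ → ℂ be bounded, measurable and 2A-periodic (σ(z + 2A) = σ(z) for all z). Then for all t, s ∈ ℝ, ∫_{[-A,A]} σ(t − b) · conj(σ(s − b)) db = ψ(t − s), where ψ(u) := ∫_{[-A,A]} σ(v) · conj(σ(v − u)) dv. Consequently, if ν ∈ L¹(ℝ^m) is nonnegative and λ is the measure with density ν(a)·1_{[-A,A]}(b) with respect to Lebesgue measure on ℝ^m × ℝ, then the kernel k(x,y) = ∫_{ℝ^m×ℝ} σ(a·x − b) conj(σ(a·y − b)) dλ(a,b) satisfies k(x,y) = ∫_{ℝ^m} ψ(a·(x − y)) ν(a) da; in particular k is translation invariant. -/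

import Mathlib

open MeasureTheory
open scoped ENNReal ComplexConjugate

/-- The measure on `ℝ^m × ℝ` with density `ν(a) · 1_{[-A,A]}(b)` with respect to
Lebesgue measure. -/
noncomputable def ridgeMeasure (m : ℕ) (A : ℝ) (ν : (Fin m → ℝ) → ℝ) :
    MeasureTheory.Measure ((Fin m → ℝ) × ℝ) :=
  (MeasureTheory.volume : MeasureTheory.Measure ((Fin m → ℝ) × ℝ)).withDensity
    (fun p => ENNReal.ofReal (ν p.1) * Set.indicator (Set.Icc (-A) A) (fun _ => 1) p.2)

/-! `b ↦ t - b` maps `[-A, A]` onto a period interval of the `2A`-periodic function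
`v ↦ σ v · conj (σ (v - (t - s)))`, whose integral over any period interval is `ψ (t - s)`.
The measure `λ` is the product of `ν(a) da` with Lebesgue measure on `[-A, A]`, so Fubini
reduces `k(x, y)` to this one-dimensional identity with `t = a·x`, `s = a·y`. -/

variable {E : Type*} [NormedAddCommGroup E] [NormedSpace ℝ E]

theorem Function.Periodic.intervalIntegral_comp_sub_left {f : ℝ → E} {T : ℝ}
    (hf : Function.Periodic f T) (a t : ℝ) :
    ∫ b in a..a + T, f (t - b) = ∫ b in a..a + T, f b := by
  rw [intervalIntegral.integral_comp_sub_left, ← hf.intervalIntegral_add_eq (t - (a + T)) a]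
  ring_nf

theorem Function.Periodic.setIntegral_Icc_comp_sub_left {f : ℝ → E} {A : ℝ}
    (hf : Function.Periodic f (2 * A)) (hA : 0 ≤ A) (t : ℝ) :
    ∫ b in Set.Icc (-A) A, f (t - b) = ∫ b in Set.Icc (-A) A, f b := by
  have h := hf.intervalIntegral_comp_sub_left (-A) t
  rwa [show -A + 2 * A = A by ring, intervalIntegral.integral_of_le (by linarith),
    intervalIntegral.integral_of_le (by linarith), ← integral_Icc_eq_integral_Ioc,
    ← integral_Icc_eq_integral_Ioc] at h

theorem Function.Periodic.setIntegral_Icc_mul_conj_comp_sub {σ : ℝ → ℂ} {A : ℝ}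
    (hσ : Function.Periodic σ (2 * A)) (hA : 0 ≤ A) (t s : ℝ) :
    ∫ b in Set.Icc (-A) A, σ (t - b) * conj (σ (s - b))
      = ∫ v in Set.Icc (-A) A, σ v * conj (σ (v - (t - s))) := by
  have hper : Function.Periodic (fun v => σ v * conj (σ (v - (t - s)))) (2 * A) :=
    hσ.mul ((hσ.sub_const (t - s)).comp conj)
  rw [← hper.setIntegral_Icc_comp_sub_left hA t]
  simp only [sub_sub_sub_cancel_left]

theorem ridgeMeasure_eq_prod {m : ℕ} (A : ℝ) {ν : (Fin m → ℝ) → ℝ} (hν : AEMeasurable ν) :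
    ridgeMeasure m A ν = (volume.withDensity fun a => ENNReal.ofReal (ν a)).prod
      (volume.restrict (Set.Icc (-A) A)) := by
  rw [← withDensity_indicator_one measurableSet_Icc, prod_withDensity₀ hν.ennreal_ofReal
    (g := (Set.Icc (-A) A).indicator 1) (aemeasurable_one.indicator measurableSet_Icc),
    ← Measure.volume_eq_prod]
  rfl

theorem integral_ridgeMeasure {m : ℕ} (A : ℝ) {ν : (Fin m → ℝ) → ℝ} (hν_int : Integrable ν)
    (hν_nonneg : ∀ a, 0 ≤ ν a) {F : (Fin m → ℝ) × ℝ → E}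
    (hF_meas : AEStronglyMeasurable F (ridgeMeasure m A ν)) (C : ℝ) (hF_bdd : ∀ p, ‖F p‖ ≤ C) :
    ∫ p, F p ∂(ridgeMeasure m A ν) = ∫ a, ν a • ∫ b in Set.Icc (-A) A, F (a, b) := by
  have := isFiniteMeasure_withDensity_ofReal hν_int.hasFiniteIntegral
  have : IsFiniteMeasure (volume.restrict (Set.Icc (-A) A)) :=
    isFiniteMeasure_restrict.2 measure_Icc_lt_top.ne
  rw [ridgeMeasure_eq_prod A hν_int.aemeasurable] at hF_meas ⊢
  rw [integral_prod F (.of_bound hF_meas C (.of_forall hF_bdd)),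
    integral_withDensity_eq_integral_toReal_smul₀ hν_int.aemeasurable.ennreal_ofReal
      (.of_forall fun _ => ENNReal.ofReal_lt_top)]
  simp only [ENNReal.toReal_ofReal (hν_nonneg _)]

theorem integral_ridgeMeasure_mul_conj {m : ℕ} (A : ℝ) {σ : ℝ → ℂ} (hσ_meas : Measurable σ)
    {M : ℝ} (hσ_bdd : ∀ z, ‖σ z‖ ≤ M) {ν : (Fin m → ℝ) → ℝ} (hν_int : Integrable ν)
    (hν_nonneg : ∀ a, 0 ≤ ν a) (x y : Fin m → ℝ) :
    ∫ p, σ ((∑ i, p.1 i * x i) - p.2) * conj (σ ((∑ i, p.1 i * y i) - p.2)) ∂(ridgeMeasure m A ν)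
      = ∫ a, ν a • ∫ b in Set.Icc (-A) A,
          σ ((∑ i, a i * x i) - b) * conj (σ ((∑ i, a i * y i) - b)) := by
  have hσ_ridge : ∀ c : Fin m → ℝ, Measurable fun p : (Fin m → ℝ) × ℝ =>
      σ ((∑ i, p.1 i * c i) - p.2) := fun c => hσ_meas.comp (by fun_prop)
  refine integral_ridgeMeasure A hν_int hν_nonneg
    ((hσ_ridge x).mul (Complex.continuous_conj.measurable.comp (hσ_ridge y))).aestronglyMeasurable
    (M * M) fun p => ?_
  rw [norm_mul, Complex.norm_conj]
  exact mul_le_mul (hσ_bdd _) (hσ_bdd _) (norm_nonneg _) ((norm_nonneg _).trans (hσ_bdd 0))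

/-- For a bounded measurable `2A`-periodic `σ`,
`∫_{[-A,A]} σ(t−b) conj(σ(s−b)) db = ψ(t−s)` where
`ψ(u) = ∫_{[-A,A]} σ(v) conj(σ(v−u)) dv`; consequently, for a nonnegative
`ν ∈ L¹(ℝ^m)` and `λ = ν(a) 1_{[-A,A]}(b) da db`, the kernel
`k(x,y) = ∫ σ(a·x−b) conj(σ(a·y−b)) dλ(a,b)` satisfies
`k(x,y) = ∫ ψ(a·(x−y)) ν(a) da`; in particular `k` is translation invariant. -/
theorem stmt_4
    (m : ℕ) (A : ℝ) (hA : 0 < A)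
    (σ : ℝ → ℂ) (hσ_meas : Measurable σ)
    (M : ℝ) (hσ_bdd : ∀ z : ℝ, ‖σ z‖ ≤ M)
    (hσ_per : ∀ z : ℝ, σ (z + 2 * A) = σ z)
    (ψ : ℝ → ℂ)
    (hψ : ∀ u : ℝ, ψ u = ∫ v in Set.Icc (-A) A, σ v * conj (σ (v - u)))
    (ν : (Fin m → ℝ) → ℝ) (hν_int : Integrable ν) (hν_nonneg : ∀ a, 0 ≤ ν a) :
    (∀ t s : ℝ, (∫ b in Set.Icc (-A) A, σ (t - b) * conj (σ (s - b))) = ψ (t - s)) ∧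
    (∀ x y : Fin m → ℝ,
        (∫ p, σ ((∑ i, p.1 i * x i) - p.2) * conj (σ ((∑ i, p.1 i * y i) - p.2))
            ∂(ridgeMeasure m A ν))
          = ∫ a : Fin m → ℝ, ψ (∑ i, a i * (x i - y i)) * (ν a : ℂ)) ∧
    (∀ x y z : Fin m → ℝ,
        (∫ p, σ ((∑ i, p.1 i * (x i + z i)) - p.2)
              * conj (σ ((∑ i, p.1 i * (y i + z i)) - p.2)) ∂(ridgeMeasure m A ν))
          = ∫ p, σ ((∑ i, p.1 i * x i) - p.2)
              * conj (σ ((∑ i, p.1 i * y i) - p.2)) ∂(ridgeMeasure m A ν)) := by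
  have shift : ∀ t s : ℝ,
      (∫ b in Set.Icc (-A) A, σ (t - b) * conj (σ (s - b))) = ψ (t - s) := fun t s => by
    rw [hψ]
    exact Function.Periodic.setIntegral_Icc_mul_conj_comp_sub hσ_per hA.le t s
  have kernel : ∀ x y : Fin m → ℝ,
      (∫ p, σ ((∑ i, p.1 i * x i) - p.2) * conj (σ ((∑ i, p.1 i * y i) - p.2))
          ∂(ridgeMeasure m A ν))
        = ∫ a : Fin m → ℝ, ψ (∑ i, a i * (x i - y i)) * (ν a : ℂ) := by
    intro x y
    rw [integral_ridgeMeasure_mul_conj A hσ_meas hσ_bdd hν_int hν_nonneg]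
    congr 1 with a
    rw [shift, Complex.real_smul, mul_comm, ← Finset.sum_sub_distrib]
    simp only [mul_sub]
  refine ⟨shift, kernel, fun x y z => ?_⟩
  have h := kernel (x + z) (y + z)
  simp only [Pi.add_apply, add_sub_add_right_eq_sub] at h
  rw [h, kernel]
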